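/- Equivocation comparison via coupling: let (M, Y^n) ∼ Λ₁ and (M, Ỹ^n) ∼ Λ_i be two joint distributions admitting a coupling Λ under which Y_j = Ỹ_j almost surely for all j in a random set A ⊆ [1:n] with |A^c| ≤ nα almost surely and H(A) ≤ n h(α). Then H_{Λ_i}(M | Ỹ^n) ≤ H_{Λ₁}(M | Y^n) + nα log|Y| + 2n h(α). -/
import Mathlib

open scoped Classical

/-- Probability that a function of the sample takes a given value. -/
noncomputable def pOf {Ω A : Type*} [Fintype Ω] (P : Ω → ℝ) (f : Ω → A) (a : A) : ℝ :=
  ∑ ω ∈ Finset.univ.filter (fun ω => f ω = a), P ω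

/-- Shannon entropy (base 2) of a random variable `f` under pmf `P`. -/
noncomputable def ent {Ω A : Type*} [Fintype Ω] [Fintype A] (P : Ω → ℝ) (f : Ω → A) : ℝ :=
  - ∑ a, pOf P f a * Real.logb 2 (pOf P f a)

/-- Conditional entropy `H(f|g)` under pmf `P`. -/
noncomputable def condEnt {Ω A B : Type*} [Fintype Ω] [Fintype A] [Fintype B]
    (P : Ω → ℝ) (f : Ω → A) (g : Ω → B) : ℝ :=
  ent P (fun ω => (f ω, g ω)) - ent P g

section Lib

set_option linter.unusedSectionVars false

variable {Ω Ω' A B C : Type*} [Fintype Ω] [Fintype Ω'] [Fintype A] [Fintype B] [Fintype C]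

lemma pOf_ite (P : Ω → ℝ) (f : Ω → A) (a : A) :
    pOf P f a = ∑ ω, if f ω = a then P ω else 0 :=
  Finset.sum_filter _ _

lemma sum_pOf_mul (P : Ω → ℝ) (f : Ω → A) (F : A → ℝ) :
    ∑ a, pOf P f a * F a = ∑ ω, P ω * F (f ω) := by
  have e1 : ∀ a, pOf P f a * F a = ∑ ω, if f ω = a then P ω * F a else 0 := by
    intro a
    rw [pOf_ite, Finset.sum_mul]
    refine Finset.sum_congr rfl fun ω _ => ?_
    split <;> simp
  rw [Finset.sum_congr rfl fun a _ => e1 a, Finset.sum_comm]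
  refine Finset.sum_congr rfl fun ω _ => ?_
  rw [Finset.sum_eq_single (f ω)]
  · rw [if_pos rfl]
  · intro a _ ha; exact if_neg fun hc => ha hc.symm
  · intro h; exact absurd (Finset.mem_univ _) h

lemma pOf_nonneg (P : Ω → ℝ) (h0 : ∀ ω, 0 ≤ P ω) (f : Ω → A) (a : A) : 0 ≤ pOf P f a :=
  Finset.sum_nonneg fun ω _ => h0 ω

lemma sum_pOf (P : Ω → ℝ) (f : Ω → A) : ∑ a, pOf P f a = ∑ ω, P ω := by
  have := sum_pOf_mul P f (fun _ => 1)
  simpa using this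

lemma pOf_le_one (P : Ω → ℝ) (h0 : ∀ ω, 0 ≤ P ω) (h1 : ∑ ω, P ω = 1) (f : Ω → A) (a : A) :
    pOf P f a ≤ 1 := by
  rw [← h1, ← sum_pOf P f]
  exact Finset.single_le_sum (fun b _ => pOf_nonneg P h0 f b) (Finset.mem_univ a)

lemma le_pOf (P : Ω → ℝ) (h0 : ∀ ω, 0 ≤ P ω) (f : Ω → A) (ω : Ω) : P ω ≤ pOf P f (f ω) :=
  Finset.single_le_sum (fun ω' _ => h0 ω')
    (Finset.mem_filter.mpr ⟨Finset.mem_univ _, rfl⟩)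

lemma pOf_pos (P : Ω → ℝ) (h0 : ∀ ω, 0 ≤ P ω) (f : Ω → A) {ω : Ω} (hω : P ω ≠ 0) :
    0 < pOf P f (f ω) :=
  lt_of_lt_of_le ((h0 ω).lt_of_ne (Ne.symm hω)) (le_pOf P h0 f ω)

lemma ent_eq (P : Ω → ℝ) (f : Ω → A) :
    ent P f = -∑ ω, P ω * Real.logb 2 (pOf P f (f ω)) := by
  rw [ent, sum_pOf_mul]

lemma pOf_comp (P : Ω → ℝ) (f : Ω → A) (φ : A → B) (c : B) :
    pOf P (fun ω => φ (f ω)) c = ∑ a, if φ a = c then pOf P f a else 0 := by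
  have e1 : ∀ a, (if φ a = c then pOf P f a else 0)
      = pOf P f a * (if φ a = c then (1:ℝ) else 0) := by
    intro a; split <;> simp
  rw [Finset.sum_congr rfl fun a _ => e1 a, sum_pOf_mul, pOf_ite]
  refine Finset.sum_congr rfl fun ω _ => ?_
  split <;> simp

lemma exists_of_pOf_ne_zero (P : Ω → ℝ) {f : Ω → A} {a : A} (h : pOf P f a ≠ 0) :
    ∃ ω, P ω ≠ 0 ∧ f ω = a := by
  by_contra hc
  push_neg at hc
  apply h
  rw [pOf_ite]
  refine Finset.sum_eq_zero fun ω _ => ?_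
  split
  · next hfa => by_contra hP; exact hc ω hP hfa
  · rfl

lemma pOf_congr_ae (P : Ω → ℝ) {f g : Ω → A} (h : ∀ ω, P ω ≠ 0 → f ω = g ω) (a : A) :
    pOf P f a = pOf P g a := by
  rw [pOf_ite, pOf_ite]
  refine Finset.sum_congr rfl fun ω _ => ?_
  by_cases hω : P ω = 0
  · split <;> split <;> simp [hω]
  · rw [h ω hω]

lemma ent_congr {P : Ω → ℝ} {Q : Ω' → ℝ} {f : Ω → A} {g : Ω' → A}
    (h : ∀ a, pOf P f a = pOf Q g a) : ent P f = ent Q g := by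
  unfold ent
  congr 1
  exact Finset.sum_congr rfl fun a _ => by rw [h a]

lemma pOf_id (P : Ω → ℝ) (a : Ω) : pOf P (fun ω => ω) a = P a := by
  rw [pOf_ite, Finset.sum_eq_single a]
  · rw [if_pos rfl]
  · intro b _ hb; exact if_neg hb
  · intro h; exact absurd (Finset.mem_univ _) h

lemma pOf_comp_congr {P : Ω → ℝ} {Q : Ω' → ℝ} {f : Ω → A} {g : Ω' → A}
    (h : ∀ a, pOf P f a = pOf Q g a) (φ : A → B) (c : B) :
    pOf P (fun ω => φ (f ω)) c = pOf Q (fun ω => φ (g ω)) c := by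
  rw [pOf_comp, pOf_comp]
  exact Finset.sum_congr rfl fun a _ => by rw [h a]

lemma pOf_le_comp (P : Ω → ℝ) (h0 : ∀ ω, 0 ≤ P ω) (f : Ω → A) (φ : A → B) (a : A) :
    pOf P f a ≤ pOf P (fun ω => φ (f ω)) (φ a) := by
  conv_rhs => rw [pOf_comp]
  have e : pOf P f a = if φ a = φ a then pOf P f a else 0 := by rw [if_pos rfl]
  rw [e]
  refine Finset.single_le_sum (f := fun x => if φ x = φ a then pOf P f x else 0)
    (fun x _ => ?_) (Finset.mem_univ a)
  split
  · exact pOf_nonneg P h0 f x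
  · exact le_rfl

lemma ent_nonneg (P : Ω → ℝ) (h0 : ∀ ω, 0 ≤ P ω) (h1 : ∑ ω, P ω = 1) (f : Ω → A) :
    0 ≤ ent P f := by
  rw [ent, neg_nonneg]
  refine Finset.sum_nonpos fun a _ => ?_
  rcases eq_or_lt_of_le (pOf_nonneg P h0 f a) with h | h
  · rw [← h]; simp
  · exact mul_nonpos_of_nonneg_of_nonpos h.le
      (Real.logb_nonpos one_lt_two h.le (pOf_le_one P h0 h1 f a))

lemma ent_comp_le (P : Ω → ℝ) (h0 : ∀ ω, 0 ≤ P ω) (f : Ω → A) (φ : A → B) :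
    ent P (fun ω => φ (f ω)) ≤ ent P f := by
  rw [ent_eq, ent_eq]
  apply neg_le_neg
  refine Finset.sum_le_sum fun ω _ => ?_
  by_cases hω : P ω = 0
  · simp [hω]
  · refine mul_le_mul_of_nonneg_left ?_ (h0 ω)
    exact Real.logb_le_logb_of_le one_lt_two (pOf_pos P h0 f hω) (pOf_le_comp P h0 f φ (f ω))

lemma pOf_comp_inj (P : Ω → ℝ) (f : Ω → A) {φ : A → B} (hφ : Function.Injective φ) (a : A) :
    pOf P (fun ω => φ (f ω)) (φ a) = pOf P f a := by
  rw [pOf_comp, Finset.sum_eq_single a]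
  · rw [if_pos rfl]
  · intro x _ hx; exact if_neg fun hc => hx (hφ hc)
  · intro h; exact absurd (Finset.mem_univ _) h

lemma ent_comp_inj (P : Ω → ℝ) (f : Ω → A) {φ : A → B} (hφ : Function.Injective φ) :
    ent P (fun ω => φ (f ω)) = ent P f := by
  unfold ent
  congr 1
  set G : B → ℝ := fun b => pOf P (fun ω => φ (f ω)) b
        * Real.logb 2 (pOf P (fun ω => φ (f ω)) b) with hG
  have e1 : ∑ b, G b = ∑ b ∈ Finset.univ.image φ, G b := by
    refine (Finset.sum_subset (Finset.subset_univ (Finset.univ.image φ)) ?_).symm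
    intro b _ hb
    have hz : pOf P (fun ω => φ (f ω)) b = 0 := by
      conv_lhs => rw [pOf_comp]
      refine Finset.sum_eq_zero fun a _ => if_neg fun hc => hb ?_
      exact Finset.mem_image.mpr ⟨a, Finset.mem_univ a, hc⟩
    simp [hG, hz]
  have e2 : ∑ b ∈ Finset.univ.image φ, G b = ∑ a, G (φ a) :=
    Finset.sum_image (fun x _ y _ hxy => hφ hxy)
  rw [e1, e2]
  refine Finset.sum_congr rfl fun a _ => ?_
  rw [hG]
  simp only [pOf_comp_inj P f hφ]

lemma ent_const (P : Ω → ℝ) (h1 : ∑ ω, P ω = 1) (b₀ : B) : ent P (fun _ => b₀) = 0 := by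
  unfold ent
  rw [neg_eq_zero]
  refine Finset.sum_eq_zero fun b _ => ?_
  by_cases h : b = b₀
  · subst h
    have e : pOf P (fun _ => b) b = 1 := by
      rw [pOf_ite]
      simpa using h1
    rw [e]; simp
  · have e : pOf P (fun _ => b₀) b = 0 := by
      rw [pOf_ite]
      refine Finset.sum_eq_zero fun ω _ => if_neg fun hc => h hc.symm
    rw [e]; simp

lemma pOf_marginal (P : Ω → ℝ) (f : Ω → A) (g : Ω → B) (b : B) :
    ∑ a, pOf P (fun ω => (f ω, g ω)) (a, b) = pOf P g b := by
  simp only [pOf_ite]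
  rw [Finset.sum_comm]
  refine Finset.sum_congr rfl fun ω _ => ?_
  by_cases hb : g ω = b
  · rw [if_pos hb, Finset.sum_eq_single (f ω)]
    · rw [if_pos (by rw [hb])]
    · intro a _ ha
      refine if_neg fun hc => ha ?_
      exact ((Prod.mk.injEq _ _ _ _ ▸ hc).1).symm
    · intro h; exact absurd (Finset.mem_univ _) h
  · rw [if_neg hb]
    refine Finset.sum_eq_zero fun a _ => if_neg fun hc => hb ?_
    exact (Prod.mk.injEq _ _ _ _ ▸ hc).2

lemma gibbs (P u v : Ω → ℝ) (h0 : ∀ ω, 0 ≤ P ω) (h1 : ∑ ω, P ω = 1)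
    (hu : ∀ ω, P ω ≠ 0 → 0 < u ω) (hv : ∀ ω, P ω ≠ 0 → 0 < v ω)
    (hsum : ∑ ω, P ω * (v ω / u ω) ≤ 1) :
    -∑ ω, P ω * Real.logb 2 (u ω) ≤ -∑ ω, P ω * Real.logb 2 (v ω) := by
  have key : ∑ ω, P ω * (Real.log (v ω) - Real.log (u ω)) ≤ 0 := by
    have step1 : ∀ ω, P ω * (Real.log (v ω) - Real.log (u ω)) ≤ P ω * (v ω / u ω - 1) := by
      intro ω
      by_cases hω : P ω = 0
      · simp [hω]
      · refine mul_le_mul_of_nonneg_left ?_ (h0 ω)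
        rw [← Real.log_div (ne_of_gt (hv ω hω)) (ne_of_gt (hu ω hω))]
        exact Real.log_le_sub_one_of_pos (div_pos (hv ω hω) (hu ω hω))
    calc ∑ ω, P ω * (Real.log (v ω) - Real.log (u ω))
        ≤ ∑ ω, P ω * (v ω / u ω - 1) := Finset.sum_le_sum fun ω _ => step1 ω
      _ = (∑ ω, P ω * (v ω / u ω)) - ∑ ω, P ω := by
          rw [← Finset.sum_sub_distrib]
          exact Finset.sum_congr rfl fun ω _ => by ring
      _ ≤ 1 - 1 := by rw [h1]; linarith
      _ = 0 := by norm_num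
  have hlog2 : (0:ℝ) < Real.log 2 := Real.log_pos one_lt_two
  rw [neg_le_neg_iff, ← sub_nonpos]
  have e : ∑ ω, P ω * Real.logb 2 (v ω) - ∑ ω, P ω * Real.logb 2 (u ω)
      = (∑ ω, P ω * (Real.log (v ω) - Real.log (u ω))) / Real.log 2 := by
    rw [Finset.sum_div, ← Finset.sum_sub_distrib]
    refine Finset.sum_congr rfl fun ω _ => ?_
    rw [Real.logb, Real.logb]
    field_simp
  rw [e]
  exact div_nonpos_of_nonpos_of_nonneg key hlog2.le

lemma condEnt_comp_le (P : Ω → ℝ) (h0 : ∀ ω, 0 ≤ P ω) (h1 : ∑ ω, P ω = 1)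
    (X : Ω → A) (W : Ω → B) (φ : B → C) :
    ent P (fun ω => (X ω, W ω)) - ent P W
      ≤ ent P (fun ω => (X ω, φ (W ω))) - ent P (fun ω => φ (W ω)) := by
  have hXWpos : ∀ ω, P ω ≠ 0 → 0 < pOf P (fun ω => (X ω, W ω)) (X ω, W ω) :=
    fun ω hω => pOf_pos P h0 (fun ω => (X ω, W ω)) hω
  have hWpos : ∀ ω, P ω ≠ 0 → 0 < pOf P W (W ω) := fun ω hω => pOf_pos P h0 W hω
  have hXZpos : ∀ ω, P ω ≠ 0 → 0 < pOf P (fun ω => (X ω, φ (W ω))) (X ω, φ (W ω)) :=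
    fun ω hω => pOf_pos P h0 (fun ω => (X ω, φ (W ω))) hω
  have hZpos : ∀ ω, P ω ≠ 0 → 0 < pOf P (fun ω => φ (W ω)) (φ (W ω)) :=
    fun ω hω => pOf_pos P h0 (fun ω => φ (W ω)) hω
  set v : Ω → ℝ := fun ω =>
    pOf P W (W ω) * pOf P (fun ω => (X ω, φ (W ω))) (X ω, φ (W ω))
      / pOf P (fun ω => φ (W ω)) (φ (W ω)) with hv
  have hvpos : ∀ ω, P ω ≠ 0 → 0 < v ω := fun ω hω =>
    div_pos (mul_pos (hWpos ω hω) (hXZpos ω hω)) (hZpos ω hω)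
  -- the Gibbs sum condition
  have hsum : ∑ ω, P ω * (v ω / pOf P (fun ω => (X ω, W ω)) (X ω, W ω)) ≤ 1 := by
    set F : A × B → ℝ := fun q =>
      (pOf P W q.2 * pOf P (fun ω => (X ω, φ (W ω))) (q.1, φ q.2)
        / pOf P (fun ω => φ (W ω)) (φ q.2)) / pOf P (fun ω => (X ω, W ω)) q with hF
    have e1 : ∑ ω, P ω * (v ω / pOf P (fun ω => (X ω, W ω)) (X ω, W ω))
        = ∑ q, pOf P (fun ω => (X ω, W ω)) q * F q := by
      rw [sum_pOf_mul]
    rw [e1]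
    have e2 : ∀ q : A × B, pOf P (fun ω => (X ω, W ω)) q * F q
        ≤ pOf P W q.2 * pOf P (fun ω => (X ω, φ (W ω))) (q.1, φ q.2)
          / pOf P (fun ω => φ (W ω)) (φ q.2) := by
      intro q
      by_cases hq : pOf P (fun ω => (X ω, W ω)) q = 0
      · rw [hq, zero_mul]
        have h1' := pOf_nonneg P h0 W q.2
        have h2' := pOf_nonneg P h0 (fun ω => (X ω, φ (W ω))) (q.1, φ q.2)
        have h3' := pOf_nonneg P h0 (fun ω => φ (W ω)) (φ q.2)
        positivity
      · rw [hF]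
        rw [mul_div_cancel₀ _ hq]
    calc ∑ q, pOf P (fun ω => (X ω, W ω)) q * F q
        ≤ ∑ q : A × B, pOf P W q.2 * pOf P (fun ω => (X ω, φ (W ω))) (q.1, φ q.2)
            / pOf P (fun ω => φ (W ω)) (φ q.2) :=
          Finset.sum_le_sum fun q _ => e2 q
      _ = ∑ b, ∑ a, pOf P W b * pOf P (fun ω => (X ω, φ (W ω))) (a, φ b)
            / pOf P (fun ω => φ (W ω)) (φ b) := by
          rw [Fintype.sum_prod_type, Finset.sum_comm]
      _ = ∑ b, pOf P W b * (∑ a, pOf P (fun ω => (X ω, φ (W ω))) (a, φ b))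
            / pOf P (fun ω => φ (W ω)) (φ b) := by
          refine Finset.sum_congr rfl fun b _ => ?_
          rw [Finset.mul_sum, Finset.sum_div]
      _ = ∑ b, pOf P W b * pOf P (fun ω => φ (W ω)) (φ b)
            / pOf P (fun ω => φ (W ω)) (φ b) := by
          refine Finset.sum_congr rfl fun b _ => ?_
          rw [pOf_marginal P X (fun ω => φ (W ω)) (φ b)]
      _ ≤ ∑ b, pOf P W b := by
          refine Finset.sum_le_sum fun b _ => ?_
          by_cases hz : pOf P (fun ω => φ (W ω)) (φ b) = 0
          · rw [hz, div_zero]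
            exact pOf_nonneg P h0 W b
          · rw [mul_div_assoc, div_self hz, mul_one]
      _ = 1 := by rw [sum_pOf, h1]
  have main := gibbs P (fun ω => pOf P (fun ω => (X ω, W ω)) (X ω, W ω)) v h0 h1
    hXWpos hvpos hsum
  have split : ∀ ω, P ω * Real.logb 2 (v ω)
      = P ω * Real.logb 2 (pOf P W (W ω))
        + P ω * Real.logb 2 (pOf P (fun ω => (X ω, φ (W ω))) (X ω, φ (W ω)))
        - P ω * Real.logb 2 (pOf P (fun ω => φ (W ω)) (φ (W ω))) := by
    intro ω
    by_cases hω : P ω = 0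
    · simp [hω]
    · rw [hv]
      rw [Real.logb_div (mul_pos (hWpos ω hω) (hXZpos ω hω)).ne' (hZpos ω hω).ne',
        Real.logb_mul (hWpos ω hω).ne' (hXZpos ω hω).ne']
      ring
  have e3 : -∑ ω, P ω * Real.logb 2 (v ω)
      = ent P W + ent P (fun ω => (X ω, φ (W ω))) - ent P (fun ω => φ (W ω)) := by
    rw [Finset.sum_congr rfl fun ω _ => split ω]
    rw [ent_eq P W, ent_eq P (fun ω => (X ω, φ (W ω))), ent_eq P (fun ω => φ (W ω))]
    rw [Finset.sum_sub_distrib, Finset.sum_add_distrib]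
    ring
  rw [ent_eq P (fun ω => (X ω, W ω))]
  have := main.trans_eq e3
  linarith

lemma ent_pair_le (P : Ω → ℝ) (h0 : ∀ ω, 0 ≤ P ω) (h1 : ∑ ω, P ω = 1)
    (U : Ω → A) (V : Ω → B) (c : ℝ)
    (hbound : ∀ ω, P ω ≠ 0 → ∃ S : Finset A,
      ((S.card : ℝ) ≤ (2:ℝ) ^ c) ∧ ∀ ω', P ω' ≠ 0 → V ω' = V ω → U ω' ∈ S) :
    ent P (fun ω => (U ω, V ω)) - ent P V ≤ c := by
  set N : B → ℕ := fun b =>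
    ((Finset.univ.filter (fun ω' => P ω' ≠ 0 ∧ V ω' = b)).image U).card with hN
  have hNle : ∀ ω, P ω ≠ 0 → (N (V ω) : ℝ) ≤ (2:ℝ) ^ c := by
    intro ω hω
    obtain ⟨S, hScard, hSmem⟩ := hbound ω hω
    refine le_trans ?_ hScard
    have hsub : (Finset.univ.filter (fun ω' => P ω' ≠ 0 ∧ V ω' = V ω)).image U ⊆ S := by
      intro u hu
      obtain ⟨ω', hω', rfl⟩ := Finset.mem_image.mp hu
      obtain ⟨-, h1', h2'⟩ := Finset.mem_filter.mp hω'
      exact hSmem ω' h1' h2'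
    exact_mod_cast Finset.card_le_card hsub
  have hN1 : ∀ ω, P ω ≠ 0 → 1 ≤ N (V ω) := by
    intro ω hω
    refine Finset.card_pos.mpr ⟨U ω, Finset.mem_image.mpr ⟨ω, ?_, rfl⟩⟩
    exact Finset.mem_filter.mpr ⟨Finset.mem_univ _, hω, rfl⟩
  have hUVpos : ∀ ω, P ω ≠ 0 → 0 < pOf P (fun ω => (U ω, V ω)) (U ω, V ω) :=
    fun ω hω => pOf_pos P h0 (fun ω => (U ω, V ω)) hω
  have hVpos : ∀ ω, P ω ≠ 0 → 0 < pOf P V (V ω) := fun ω hω => pOf_pos P h0 V hω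
  set v : Ω → ℝ := fun ω => pOf P V (V ω) / N (V ω) with hv
  have hvpos : ∀ ω, P ω ≠ 0 → 0 < v ω := by
    intro ω hω
    refine div_pos (hVpos ω hω) ?_
    exact_mod_cast hN1 ω hω
  have hsum : ∑ ω, P ω * (v ω / pOf P (fun ω => (U ω, V ω)) (U ω, V ω)) ≤ 1 := by
    set F : A × B → ℝ := fun q => (pOf P V q.2 / N q.2) / pOf P (fun ω => (U ω, V ω)) q
      with hF
    have e1 : ∑ ω, P ω * (v ω / pOf P (fun ω => (U ω, V ω)) (U ω, V ω))
        = ∑ q, pOf P (fun ω => (U ω, V ω)) q * F q := by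
      rw [sum_pOf_mul]
    rw [e1]
    have e2 : ∀ q : A × B, pOf P (fun ω => (U ω, V ω)) q * F q
        ≤ if pOf P (fun ω => (U ω, V ω)) q ≠ 0 then pOf P V q.2 / N q.2 else 0 := by
      intro q
      by_cases hq : pOf P (fun ω => (U ω, V ω)) q = 0
      · rw [hq, zero_mul, if_neg (by simpa using hq)]
      · rw [if_pos hq, hF, mul_div_cancel₀ _ hq]
    calc ∑ q, pOf P (fun ω => (U ω, V ω)) q * F q
        ≤ ∑ q : A × B, if pOf P (fun ω => (U ω, V ω)) q ≠ 0
            then pOf P V q.2 / N q.2 else 0 := Finset.sum_le_sum fun q _ => e2 q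
      _ = ∑ b, ∑ a, (if pOf P (fun ω => (U ω, V ω)) (a, b) ≠ 0
            then pOf P V b / N b else 0) := by rw [Fintype.sum_prod_type, Finset.sum_comm]
      _ ≤ ∑ b, pOf P V b := by
          refine Finset.sum_le_sum fun b _ => ?_
          have e3 : ∑ a, (if pOf P (fun ω => (U ω, V ω)) (a, b) ≠ 0
              then pOf P V b / N b else 0)
            = ((Finset.univ.filter
                (fun a => pOf P (fun ω => (U ω, V ω)) (a, b) ≠ 0)).card : ℕ)
              * (pOf P V b / N b) := by
            rw [← Finset.sum_filter, Finset.sum_const, nsmul_eq_mul]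
          rw [e3]
          have hsubset : (Finset.univ.filter
              (fun a => pOf P (fun ω => (U ω, V ω)) (a, b) ≠ 0))
              ⊆ (Finset.univ.filter (fun ω' => P ω' ≠ 0 ∧ V ω' = b)).image U := by
            intro a ha
            obtain ⟨ω, hω, hfa⟩ := exists_of_pOf_ne_zero P (Finset.mem_filter.mp ha).2
            have h1' : U ω = a := (Prod.mk.injEq _ _ _ _ ▸ hfa).1
            have h2' : V ω = b := (Prod.mk.injEq _ _ _ _ ▸ hfa).2
            exact Finset.mem_image.mpr ⟨ω, Finset.mem_filter.mpr
              ⟨Finset.mem_univ _, hω, h2'⟩, h1'⟩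
          have hcard : ((Finset.univ.filter
              (fun a => pOf P (fun ω => (U ω, V ω)) (a, b) ≠ 0)).card : ℝ) ≤ (N b : ℝ) := by
            exact_mod_cast Finset.card_le_card hsubset
          by_cases hNb : N b = 0
          · have : (Finset.univ.filter
                (fun a => pOf P (fun ω => (U ω, V ω)) (a, b) ≠ 0)).card = 0 := by
              have h' : (Finset.univ.filter
                  (fun a => pOf P (fun ω => (U ω, V ω)) (a, b) ≠ 0)).card ≤ N b :=
                Finset.card_le_card hsubset
              exact Nat.le_zero.mp (hNb ▸ h')
            rw [this]
            simpa using pOf_nonneg P h0 V b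
          · have hNb' : (0:ℝ) < (N b : ℝ) := by
              have : 1 ≤ N b := Nat.one_le_iff_ne_zero.mpr hNb
              exact_mod_cast Nat.lt_of_lt_of_le Nat.zero_lt_one this
            calc ((Finset.univ.filter
                  (fun a => pOf P (fun ω => (U ω, V ω)) (a, b) ≠ 0)).card : ℝ)
                  * (pOf P V b / N b)
                ≤ (N b : ℝ) * (pOf P V b / N b) := by
                  refine mul_le_mul_of_nonneg_right hcard ?_
                  exact div_nonneg (pOf_nonneg P h0 V b) hNb'.le
              _ = pOf P V b := by
                  rw [mul_div_assoc', mul_comm, mul_div_assoc, div_self hNb'.ne', mul_one]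
      _ = 1 := by rw [sum_pOf, h1]
  have main := gibbs P (fun ω => pOf P (fun ω => (U ω, V ω)) (U ω, V ω)) v h0 h1
    hUVpos hvpos hsum
  have split : ∀ ω, P ω * Real.logb 2 (v ω)
      = P ω * Real.logb 2 (pOf P V (V ω)) - P ω * Real.logb 2 (N (V ω)) := by
    intro ω
    by_cases hω : P ω = 0
    · simp [hω]
    · rw [hv]
      have hNpos : (0:ℝ) < (N (V ω) : ℝ) := by exact_mod_cast hN1 ω hω
      rw [Real.logb_div (hVpos ω hω).ne' hNpos.ne']
      ring
  have e4 : -∑ ω, P ω * Real.logb 2 (v ω)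
      = ent P V + ∑ ω, P ω * Real.logb 2 (N (V ω)) := by
    rw [Finset.sum_congr rfl fun ω _ => split ω, Finset.sum_sub_distrib, ent_eq P V]
    ring
  have e5 : ∑ ω, P ω * Real.logb 2 (N (V ω)) ≤ c := by
    calc ∑ ω, P ω * Real.logb 2 (N (V ω)) ≤ ∑ ω, P ω * c := by
          refine Finset.sum_le_sum fun ω _ => ?_
          by_cases hω : P ω = 0
          · simp [hω]
          · refine mul_le_mul_of_nonneg_left ?_ (h0 ω)
            have hNpos : (0:ℝ) < (N (V ω) : ℝ) := by exact_mod_cast hN1 ω hω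
            exact (Real.logb_le_iff_le_rpow one_lt_two hNpos).mpr (hNle ω hω)
      _ = c := by rw [← Finset.sum_mul, h1, one_mul]
  rw [ent_eq P (fun ω => (U ω, V ω))]
  have := main.trans_eq e4
  linarith

lemma ent_comp_le' (P : Ω → ℝ) (h0 : ∀ ω, 0 ≤ P ω) (f : Ω → A) (φ : A → B)
    (g : Ω → B) (hg : ∀ ω, φ (f ω) = g ω) : ent P g ≤ ent P f := by
  have h := ent_comp_le P h0 f φ
  have e : ent P (fun ω => φ (f ω)) = ent P g :=
    ent_congr (fun z => pOf_congr_ae P (fun ω _ => hg ω) z)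
  linarith

lemma ent_comp_inj' (P : Ω → ℝ) (f : Ω → A) {φ : A → B} (hφ : Function.Injective φ)
    (g : Ω → B) (hg : ∀ ω, φ (f ω) = g ω) : ent P g = ent P f := by
  have h := ent_comp_inj P f hφ
  have e : ent P (fun ω => φ (f ω)) = ent P g :=
    ent_congr (fun z => pOf_congr_ae P (fun ω _ => hg ω) z)
  linarith

lemma condEnt_comp_le' (P : Ω → ℝ) (h0 : ∀ ω, 0 ≤ P ω) (h1 : ∑ ω, P ω = 1)
    (X : Ω → A) (W : Ω → B) (φ : B → C) (g : Ω → C) (hg : ∀ ω, φ (W ω) = g ω) :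
    ent P (fun ω => (X ω, W ω)) - ent P W
      ≤ ent P (fun ω => (X ω, g ω)) - ent P g := by
  have h := condEnt_comp_le P h0 h1 X W φ
  have e1 : ent P (fun ω => (X ω, φ (W ω))) = ent P (fun ω => (X ω, g ω)) :=
    ent_congr (fun z => pOf_congr_ae P (fun ω _ => by rw [hg ω]) z)
  have e2 : ent P (fun ω => φ (W ω)) = ent P g :=
    ent_congr (fun z => pOf_congr_ae P (fun ω _ => hg ω) z)
  linarith

end Lib

set_option maxHeartbeats 1000000 in
/-- Equivocation comparison via coupling: if `(M,Y^n) ∼ Λ₁` and `(M,Ỹ^n) ∼ Λᵢ` admit a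
coupling `Λ` under which `Y_j = Ỹ_j` a.s. for all `j` in a random set `A` with `|Aᶜ| ≤ nα`
a.s. and `H(A) ≤ n h(α)`, then
`H_{Λᵢ}(M|Ỹ^n) ≤ H_{Λ₁}(M|Y^n) + nα log|Y| + 2n h(α)`. -/
theorem equivocation_coupling (Msg Y : Type) [Fintype Msg] [Fintype Y] (n : ℕ) (α : ℝ)
    (Λ₁ Λᵢ : Msg × (Fin n → Y) → ℝ)
    (h₁0 : ∀ ω, 0 ≤ Λ₁ ω) (h₁1 : ∑ ω, Λ₁ ω = 1)
    (hᵢ0 : ∀ ω, 0 ≤ Λᵢ ω) (hᵢ1 : ∑ ω, Λᵢ ω = 1)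
    (Λ : Msg × (Fin n → Y) × (Fin n → Y) × Finset (Fin n) → ℝ)
    (hΛ0 : ∀ ω, 0 ≤ Λ ω) (hΛ1 : ∑ ω, Λ ω = 1)
    (hm1 : ∀ m y, pOf Λ (fun ω => (ω.1, ω.2.1)) (m, y) = Λ₁ (m, y))
    (hm2 : ∀ m y, pOf Λ (fun ω => (ω.1, ω.2.2.1)) (m, y) = Λᵢ (m, y))
    (hagree : ∀ ω, Λ ω ≠ 0 → ∀ j ∈ ω.2.2.2, ω.2.1 j = ω.2.2.1 j)
    (hsize : ∀ ω, Λ ω ≠ 0 → (((ω.2.2.2)ᶜ.card : ℝ)) ≤ n * α)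
    (hentA : ent Λ (fun ω => ω.2.2.2)
      ≤ n * (-(α * Real.logb 2 α) - (1 - α) * Real.logb 2 (1 - α))) :
    condEnt Λᵢ Prod.fst Prod.snd
      ≤ condEnt Λ₁ Prod.fst Prod.snd + n * α * Real.logb 2 (Fintype.card Y)
        + 2 * n * (-(α * Real.logb 2 α) - (1 - α) * Real.logb 2 (1 - α)) := by
  classical
  set c : ℝ := n * α * Real.logb 2 (Fintype.card Y) with hc_def
  set nh : ℝ := n * (-(α * Real.logb 2 α) - (1 - α) * Real.logb 2 (1 - α)) with hnh_def
  -- nh is nonnegative since it dominates an entropy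
  have hA2 : 0 ≤ nh := le_trans (ent_nonneg Λ hΛ0 hΛ1 (fun ω => ω.2.2.2)) hentA
  -- endpoint identifications
  have hidsᵢ : ∀ z : Msg × (Fin n → Y),
      pOf Λ (fun ω => (ω.1, ω.2.2.1)) z = pOf Λᵢ (fun p => p) z := by
    rintro ⟨m, y⟩
    rw [hm2 m y, pOf_id]
  have hids₁ : ∀ z : Msg × (Fin n → Y),
      pOf Λ (fun ω => (ω.1, ω.2.1)) z = pOf Λ₁ (fun p => p) z := by
    rintro ⟨m, y⟩
    rw [hm1 m y, pOf_id]
  have eL : condEnt Λᵢ Prod.fst Prod.snd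
      = ent Λ (fun ω => (ω.1, ω.2.2.1)) - ent Λ (fun ω => ω.2.2.1) := by
    unfold condEnt
    have e1 : ent Λᵢ (fun p => (Prod.fst p, Prod.snd p))
        = ent Λ (fun ω => (ω.1, ω.2.2.1)) :=
      ent_congr (fun z => (hidsᵢ z).symm)
    have e2 : ent Λᵢ Prod.snd = ent Λ (fun ω => ω.2.2.1) :=
      ent_congr (fun b => (pOf_comp_congr hidsᵢ Prod.snd b).symm)
    rw [e1, e2]
  have eR : condEnt Λ₁ Prod.fst Prod.snd
      = ent Λ (fun ω => (ω.1, ω.2.1)) - ent Λ (fun ω => ω.2.1) := by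
    unfold condEnt
    have e1 : ent Λ₁ (fun p => (Prod.fst p, Prod.snd p))
        = ent Λ (fun ω => (ω.1, ω.2.1)) :=
      ent_congr (fun z => (hids₁ z).symm)
    have e2 : ent Λ₁ Prod.snd = ent Λ (fun ω => ω.2.1) :=
      ent_congr (fun b => (pOf_comp_congr hids₁ Prod.snd b).symm)
    rw [e1, e2]
  -- step 1 : add A
  have h1 : ent Λ (fun ω => (ω.1, ω.2.2.1))
      ≤ ent Λ (fun ω => (ω.1, (ω.2.2.1, ω.2.2.2))) :=
    ent_comp_le' Λ hΛ0 (fun ω => (ω.1, (ω.2.2.1, ω.2.2.2))) (fun q => (q.1, q.2.1))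
      (fun ω => (ω.1, ω.2.2.1)) (fun ω => rfl)
  -- subadditivity : H(Yt, A) ≤ H(Yt) + H(A)
  have h2 : ent Λ (fun ω => (ω.2.2.1, ω.2.2.2))
      ≤ ent Λ (fun ω => ω.2.2.1) + ent Λ (fun ω => ω.2.2.2) := by
    have hs := condEnt_comp_le Λ hΛ0 hΛ1 (fun ω => ω.2.2.2) (fun ω => ω.2.2.1)
      (fun _ => ())
    have hconst : ent Λ (fun _ => ()) = 0 := ent_const Λ hΛ1 ()
    have hAunit : ent Λ (fun ω => (ω.2.2.2, ())) = ent Λ (fun ω => ω.2.2.2) :=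
      ent_comp_inj' Λ (fun ω => ω.2.2.2)
        (φ := fun s => (s, ())) (fun x y h => congrArg Prod.fst h)
        (fun ω => (ω.2.2.2, ())) (fun ω => rfl)
    have hswap : ent Λ (fun ω => (ω.2.2.1, ω.2.2.2))
        = ent Λ (fun ω => (ω.2.2.2, ω.2.2.1)) :=
      ent_comp_inj' Λ (fun ω => (ω.2.2.2, ω.2.2.1)) (φ := Prod.swap)
        Prod.swap_injective (fun ω => (ω.2.2.1, ω.2.2.2)) (fun ω => rfl)
    have hAu : ent Λ (fun ω => ((fun ω => ω.2.2.2) ω, (fun (_ : Msg × (Fin n → Y) × (Fin n → Y) × Finset (Fin n)) => ()) ω)) = ent Λ (fun ω => (ω.2.2.2, ())) := rfl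
    linarith [hs, hconst, hAunit, hswap]
  -- step 2 : condition on the masked channel output g₁ (built from Yt)
  have h3 : ent Λ (fun ω => (ω.1, (ω.2.2.1, ω.2.2.2)))
        - ent Λ (fun ω => (ω.2.2.1, ω.2.2.2))
      ≤ ent Λ (fun ω => (ω.1, fun j => if j ∈ ω.2.2.2 then some (ω.2.2.1 j) else none))
        - ent Λ (fun ω => (fun j => if j ∈ ω.2.2.2 then some (ω.2.2.1 j) else none)) :=
    condEnt_comp_le' Λ hΛ0 hΛ1 (fun ω => ω.1) (fun ω => (ω.2.2.1, ω.2.2.2))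
      (fun q => fun j => if j ∈ q.2 then some (q.1 j) else none)
      (fun ω => (fun j => if j ∈ ω.2.2.2 then some (ω.2.2.1 j) else none))
      (fun ω => rfl)
  -- a.s. equality g₁ = g₁' (mask of Yf)
  have hae : ∀ ω : Msg × (Fin n → Y) × (Fin n → Y) × Finset (Fin n), Λ ω ≠ 0 →
      (fun j => if j ∈ ω.2.2.2 then some (ω.2.2.1 j) else none)
        = (fun j => if j ∈ ω.2.2.2 then some (ω.2.1 j) else none) := by
    intro ω hω
    funext j
    by_cases hj : j ∈ ω.2.2.2
    · rw [if_pos hj, if_pos hj, hagree ω hω j hj]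
    · rw [if_neg hj, if_neg hj]
  have e_pair : ent Λ (fun ω => (ω.1, fun j => if j ∈ ω.2.2.2 then some (ω.2.2.1 j) else none))
      = ent Λ (fun ω => (ω.1, fun j => if j ∈ ω.2.2.2 then some (ω.2.1 j) else none)) :=
    ent_congr (fun z => pOf_congr_ae Λ
      (fun ω hω => congrArg (Prod.mk ω.1) (hae ω hω)) z)
  have e_single : ent Λ (fun ω => (fun j => if j ∈ ω.2.2.2 then some (ω.2.2.1 j) else none))
      = ent Λ (fun ω => (fun j => if j ∈ ω.2.2.2 then some (ω.2.1 j) else none)) :=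
    ent_congr (fun z => pOf_congr_ae Λ (fun ω hω => hae ω hω) z)
  -- step 3 : add g₂ (Yf on the complement)
  have h5 : ent Λ (fun ω => (ω.1, fun j => if j ∈ ω.2.2.2 then some (ω.2.1 j) else none))
      ≤ ent Λ (fun ω => (ω.1,
          ((fun j => if j ∈ ω.2.2.2 then some (ω.2.1 j) else none),
           (fun j => if j ∈ ω.2.2.2 then none else some (ω.2.1 j))))) :=
    ent_comp_le' Λ hΛ0
      (fun ω => (ω.1,
          ((fun j => if j ∈ ω.2.2.2 then some (ω.2.1 j) else none),
           (fun j => if j ∈ ω.2.2.2 then none else some (ω.2.1 j)))))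
      (fun q => (q.1, q.2.1))
      (fun ω => (ω.1, fun j => if j ∈ ω.2.2.2 then some (ω.2.1 j) else none))
      (fun ω => rfl)
  -- step 4 : (g₁', g₂) determines Yf
  have h6 : ent Λ (fun ω => (ω.1,
          ((fun j => if j ∈ ω.2.2.2 then some (ω.2.1 j) else none),
           (fun j => if j ∈ ω.2.2.2 then none else some (ω.2.1 j)))))
        - ent Λ (fun ω =>
          ((fun j => if j ∈ ω.2.2.2 then some (ω.2.1 j) else none),
           (fun j => if j ∈ ω.2.2.2 then none else some (ω.2.1 j))))
      ≤ ent Λ (fun ω => (ω.1, fun j => some (ω.2.1 j)))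
        - ent Λ (fun ω => (fun j => some (ω.2.1 j))) := by
    refine condEnt_comp_le' Λ hΛ0 hΛ1 (fun ω => ω.1)
      (fun ω =>
          ((fun j => if j ∈ ω.2.2.2 then some (ω.2.1 j) else none),
           (fun j => if j ∈ ω.2.2.2 then none else some (ω.2.1 j))))
      (fun q => fun j => if q.1 j = none then q.2 j else q.1 j)
      (fun ω => (fun j => some (ω.2.1 j))) ?_
    intro ω
    funext j
    by_cases hj : j ∈ ω.2.2.2 <;> simp [hj]
  -- relabeling (dropping `some`)
  have h7a : ent Λ (fun ω => (ω.1, fun j => some (ω.2.1 j)))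
      = ent Λ (fun ω => (ω.1, ω.2.1)) := by
    refine ent_comp_inj' Λ (fun ω => (ω.1, ω.2.1))
      (φ := fun q : Msg × (Fin n → Y) => (q.1, fun j => some (q.2 j)))
      ?_ (fun ω => (ω.1, fun j => some (ω.2.1 j))) (fun ω => rfl)
    intro p q h
    have hb : ((p.1, fun j => some (p.2 j)) : Msg × (Fin n → Option Y))
        = (q.1, fun j => some (q.2 j)) := h
    have h1' := congrArg Prod.fst hb
    have h2' := congrArg Prod.snd hb
    simp only at h1' h2'
    have h3' : p.2 = q.2 := by
      funext j
      exact Option.some.inj (congrFun h2' j)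
    exact Prod.ext h1' h3'
  have h7b : ent Λ (fun ω => (fun j => some (ω.2.1 j)))
      = ent Λ (fun ω => ω.2.1) := by
    refine ent_comp_inj' Λ (fun ω => ω.2.1)
      (φ := fun y : Fin n → Y => (fun j => some (y j)))
      ?_ (fun ω => (fun j => some (ω.2.1 j))) (fun ω => rfl)
    intro p q h
    funext j
    exact Option.some.inj (congrFun h j)
  -- swap for the support-bound step
  have hsw : ent Λ (fun ω =>
          ((fun j => if j ∈ ω.2.2.2 then some (ω.2.1 j) else none),
           (fun j => if j ∈ ω.2.2.2 then none else some (ω.2.1 j))))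
      = ent Λ (fun ω =>
          ((fun j => if j ∈ ω.2.2.2 then none else some (ω.2.1 j)),
           (fun j => if j ∈ ω.2.2.2 then some (ω.2.1 j) else none))) :=
    (ent_comp_inj' Λ (fun ω =>
          ((fun j => if j ∈ ω.2.2.2 then some (ω.2.1 j) else none),
           (fun j => if j ∈ ω.2.2.2 then none else some (ω.2.1 j))))
      (φ := Prod.swap) Prod.swap_injective
      (fun ω =>
          ((fun j => if j ∈ ω.2.2.2 then none else some (ω.2.1 j)),
           (fun j => if j ∈ ω.2.2.2 then some (ω.2.1 j) else none)))
      (fun ω => rfl)).symm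
  -- nonnegativity of c
  have hc : 0 ≤ c := by
    by_cases hn : n = 0
    · rw [hc_def, hn]; simp
    · obtain ⟨ω₀, hω₀⟩ : ∃ ω, Λ ω ≠ 0 := by
        by_contra h
        push_neg at h
        rw [Finset.sum_eq_zero (fun ω _ => h ω)] at hΛ1
        norm_num at hΛ1
      have hY : 0 < Fintype.card Y :=
        Fintype.card_pos_iff.mpr ⟨ω₀.2.1 ⟨0, Nat.pos_of_ne_zero hn⟩⟩
      have hα : 0 ≤ α := by
        have hs := hsize ω₀ hω₀
        have h0c : (0:ℝ) ≤ ((ω₀.2.2.2ᶜ).card : ℝ) := Nat.cast_nonneg _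
        have hnp : (0:ℝ) < (n:ℝ) := by exact_mod_cast Nat.pos_of_ne_zero hn
        nlinarith
      exact mul_nonneg (mul_nonneg (Nat.cast_nonneg n) hα)
        (Real.logb_nonneg one_lt_two (by exact_mod_cast hY))
  -- the support bound
  have h8 : ent Λ (fun ω =>
          ((fun j => if j ∈ ω.2.2.2 then none else some (ω.2.1 j)),
           (fun j => if j ∈ ω.2.2.2 then some (ω.2.1 j) else none)))
        - ent Λ (fun ω => (fun j => if j ∈ ω.2.2.2 then some (ω.2.1 j) else none)) ≤ c := by
    refine ent_pair_le Λ hΛ0 hΛ1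
      (fun ω => (fun j => if j ∈ ω.2.2.2 then none else some (ω.2.1 j)))
      (fun ω => (fun j => if j ∈ ω.2.2.2 then some (ω.2.1 j) else none)) c ?_
    intro ω hω
    beta_reduce
    -- all sample points in the fiber have the same set A
    have hAv : ∀ ω' : Msg × (Fin n → Y) × (Fin n → Y) × Finset (Fin n),
        (fun j => if j ∈ ω'.2.2.2 then some (ω'.2.1 j) else none)
          = (fun j => if j ∈ ω.2.2.2 then some (ω.2.1 j) else none) →
        ω'.2.2.2 = ω.2.2.2 := by
      intro ω' h
      ext j
      have hcf := congrFun h j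
      by_cases hj : j ∈ ω'.2.2.2 <;> by_cases hj2 : j ∈ ω.2.2.2 <;>
        simp [hj, hj2] at hcf ⊢
    -- a generic cardinality bound for sets of masked sequences
    have key : ∀ S : Finset (Fin n → Option Y),
        (∀ u ∈ S, (∀ j ∈ ω.2.2.2, u j = none) ∧
          ∀ j, j ∉ ω.2.2.2 → ∃ y, u j = some y) →
        (S.card : ℝ) ≤ (2:ℝ) ^ c := by
      intro S hS
      have hcard1 : S.card ≤ Fintype.card Y ^ ((ω.2.2.2ᶜ : Finset (Fin n)).card) := by
        have hinj : S.card
            ≤ (Finset.univ : Finset ({j // j ∈ (ω.2.2.2ᶜ : Finset (Fin n))} → Y)).card := by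
          refine Finset.card_le_card_of_injOn
            (fun u => fun j => (u j.1).getD (ω.2.1 j.1))
            (fun u _ => Finset.mem_univ _) ?_
          intro u₁ hu₁ u₂ hu₂ heq
          have p₁ := hS u₁ (Finset.mem_coe.mp hu₁)
          have p₂ := hS u₂ (Finset.mem_coe.mp hu₂)
          funext j
          by_cases hj : j ∈ ω.2.2.2
          · rw [p₁.1 j hj, p₂.1 j hj]
          · have hj' : j ∈ (ω.2.2.2ᶜ : Finset (Fin n)) := Finset.mem_compl.mpr hj
            obtain ⟨y₁, hy₁⟩ := p₁.2 j hj
            obtain ⟨y₂, hy₂⟩ := p₂.2 j hj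
            have hgd := congrFun heq ⟨j, hj'⟩
            simp only [hy₁, hy₂, Option.getD_some] at hgd
            rw [hy₁, hy₂, hgd]
        calc S.card ≤ _ := hinj
          _ = Fintype.card ({j // j ∈ (ω.2.2.2ᶜ : Finset (Fin n))} → Y) := Finset.card_univ
          _ = Fintype.card Y ^ ((ω.2.2.2ᶜ : Finset (Fin n)).card) := by
              rw [Fintype.card_fun, Fintype.card_coe]
      rcases Nat.eq_zero_or_pos (Fintype.card Y) with hY | hY
      · -- Y is empty, so n = 0 and at most one masked sequence exists
        have hn : n = 0 := by
          by_contra hn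
          have hne : Nonempty Y := ⟨ω.2.1 ⟨0, Nat.pos_of_ne_zero hn⟩⟩
          rw [Fintype.card_eq_zero_iff] at hY
          exact hY.elim hne.some
        subst hn
        have hk : (ω.2.2.2ᶜ : Finset (Fin 0)).card = 0 := by
          have := Finset.card_le_univ (ω.2.2.2ᶜ : Finset (Fin 0))
          simpa using this
        rw [hk, pow_zero] at hcard1
        have hc0 : c = 0 := by
          rw [hc_def]
          simp
        rw [hc0, Real.rpow_zero]
        exact_mod_cast hcard1
      · have h1Y : (1:ℝ) ≤ (Fintype.card Y : ℝ) := by exact_mod_cast hY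
        have e2c : (2:ℝ) ^ c = (Fintype.card Y : ℝ) ^ ((n:ℝ) * α) := by
          rw [hc_def, mul_comm ((n:ℝ) * α) (Real.logb 2 (Fintype.card Y)),
            Real.rpow_mul (by norm_num : (0:ℝ) ≤ 2),
            Real.rpow_logb (by norm_num) (by norm_num) (by exact_mod_cast hY)]
        calc (S.card : ℝ)
            ≤ ((Fintype.card Y ^ ((ω.2.2.2ᶜ : Finset (Fin n)).card) : ℕ) : ℝ) := by
              exact_mod_cast hcard1
          _ = (Fintype.card Y : ℝ) ^ ((((ω.2.2.2ᶜ : Finset (Fin n)).card : ℕ)) : ℝ) := by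
              rw [Nat.cast_pow, Real.rpow_natCast]
          _ ≤ (Fintype.card Y : ℝ) ^ ((n:ℝ) * α) :=
              Real.rpow_le_rpow_of_exponent_le h1Y (hsize ω hω)
          _ = 2 ^ c := e2c.symm
    refine ⟨Finset.univ.filter (fun u : Fin n → Option Y =>
      (∀ j ∈ ω.2.2.2, u j = none) ∧ ∀ j, j ∉ ω.2.2.2 → ∃ y, u j = some y), ?_, ?_⟩
    · refine key _ ?_
      intro u hu
      exact (Finset.mem_filter.mp hu).2
    · intro ω' hω' hfib
      have hA' := hAv ω' hfib
      refine Finset.mem_filter.mpr ⟨Finset.mem_univ _, ?_, ?_⟩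
      · intro j hj
        show (if j ∈ ω'.2.2.2 then none else some (ω'.2.1 j)) = none
        rw [if_pos (hA' ▸ hj)]
      · intro j hj
        refine ⟨ω'.2.1 j, ?_⟩
        show (if j ∈ ω'.2.2.2 then none else some (ω'.2.1 j)) = some (ω'.2.1 j)
        rw [if_neg (fun hc' => hj (hA' ▸ hc'))]
  rw [eL, eR]
  linarith [h1, h2, h3, e_pair, e_single, h5, h6, h7a, h7b, hsw, h8, hentA, hA2, hc,
    hnh_def]
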